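/- Consider a generalized switch under MaxWeight as follows. Fix N ≥ 1, a weight vector γ ∈ ℝ^N with γ_i > 0 for all i, service decisions k = 1,…,K where decision k yields service vector v^{k,j} ∈ ℝ^N with 0 ≤ v^{k,j} ≤ S^max componentwise, with probability p^{k,j} (j = 1,…,O_k, Σ_j p^{k,j} = 1), and mean service vectors μ^k = Σ_j p^{k,j} v^{k,j}, assumed nonzero and pairwise distinct. Let f be a probability density on ℝ^N vanishing outside [0, A^max] with δ_* ≤ f ≤ δ^* a.e. there, where 0 ≤ S^max_i < A^max_i for all i, and let λ = ∫ x f(x) dx. Fix a measurable selection k: ℝ^N_+ → {1,…,K} with k(x) ∈ argmax_l (γx)·μ^l for every x, and define the queue kernel P on ℝ^N_+ by: P(x, ·) is the law of (x − S)^+ + A, where S equals v^{k(x),j} with probability p^{k(x),j} and A is independent of S with density f. Let V = {x ∈ ℝ^N_+ : x ≤ Σ_k ψ_k μ^k for some ψ_k ≥ 0, Σ_k ψ_k = 1}. If λ lies in the interior of V, then every invariant probability measure Γ of P (i.e., Γ(A) = ∫ P(x, A) dΓ(x) for all Borel A ⊆ ℝ^N_+) satisfies ∫ ‖x‖^r dΓ(x)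 < ∞ for every r > 0. -/

import Mathlib

open MeasureTheory
open scoped ENNReal



lemma mw_pow_ub {a b : ℝ} (hb : 0 ≤ b) (hab : b ≤ a) (n : ℕ) :
    a ^ (n+1) ≤ b ^ (n+1) + (n+1) * a ^ n * (a - b) := by
  induction n with
  | zero => simp
  | succ n ih =>
    have ha : 0 ≤ a := hb.trans hab
    have hbn : b ^ (n+1) ≤ a ^ (n+1) := pow_le_pow_left₀ hb hab _
    have h2 : a * a ^ (n+1) ≤ a * (b ^ (n+1) + (n+1) * a ^ n * (a - b)) :=
      mul_le_mul_of_nonneg_left ih ha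
    have h4 : (a - b) * b ^ (n+1) ≤ (a - b) * a ^ (n+1) :=
      mul_le_mul_of_nonneg_left hbn (sub_nonneg.2 hab)
    push_cast
    calc a ^ (n+1+1) = a * a ^ (n+1) := by ring
      _ ≤ a * (b ^ (n+1) + ((n:ℝ)+1) * a ^ n * (a - b)) := h2
      _ = a * b ^ (n+1) + ((n:ℝ)+1) * (a ^ n * a) * (a - b) := by ring
      _ = b ^ (n+1+1) + (a - b) * b ^ (n+1) + ((n:ℝ)+1) * a ^ (n+1) * (a - b) := by ring
      _ ≤ b ^ (n+1+1) + (a - b) * a ^ (n+1) + ((n:ℝ)+1) * a ^ (n+1) * (a - b) := by linarith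
      _ = b ^ (n+1+1) + ((n:ℝ)+1+1) * a ^ (n+1) * (a - b) := by ring

lemma mw_pow_lb {a b : ℝ} (hb : 0 ≤ b) (hab : b ≤ a) (n : ℕ) :
    b ^ (n+1) + (n+1) * b ^ n * (a - b) ≤ a ^ (n+1) := by
  induction n with
  | zero => simp
  | succ n ih =>
    have ha : 0 ≤ b ^ n := pow_nonneg hb n
    have h2 : a * (b ^ (n+1) + (n+1) * b ^ n * (a - b)) ≤ a * a ^ (n+1) :=
      mul_le_mul_of_nonneg_left ih (hb.trans hab)
    have h7 : ((n:ℝ)+1) * (b * b ^ n) * (a - b) ≤ ((n:ℝ)+1) * (a * b ^ n) * (a - b) := by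
      have hba : b * b ^ n ≤ a * b ^ n := mul_le_mul_of_nonneg_right hab ha
      have h0 : (0:ℝ) ≤ ((n:ℝ)+1) := by positivity
      have h1 : (0:ℝ) ≤ a - b := sub_nonneg.2 hab
      exact mul_le_mul_of_nonneg_right (mul_le_mul_of_nonneg_left hba h0) h1
    push_cast
    calc b ^ (n+1+1) + ((n:ℝ)+1+1) * b ^ (n+1) * (a - b)
        = b * b ^ (n+1) + (a - b) * b ^ (n+1) + ((n:ℝ)+1) * (b * b ^ n) * (a - b) := by ring
      _ ≤ b * b ^ (n+1) + (a - b) * b ^ (n+1) + ((n:ℝ)+1) * (a * b ^ n) * (a - b) := by linarith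
      _ = a * (b ^ (n+1) + ((n:ℝ)+1) * b ^ n * (a - b)) := by ring
      _ ≤ a * a ^ (n+1) := h2
      _ = a ^ (n+1+1) := by ring

lemma mw_cauchy {N : ℕ} (f g : Fin N → ℝ) :
    ∑ i, f i * g i ≤ Real.sqrt (∑ i, f i ^ 2) * Real.sqrt (∑ i, g i ^ 2) := by
  have h := Finset.sum_mul_sq_le_sq_mul_sq Finset.univ f g
  have h1 : 0 ≤ ∑ i, f i ^ 2 := Finset.sum_nonneg fun i _ => sq_nonneg _
  have h2 : 0 ≤ ∑ i, g i ^ 2 := Finset.sum_nonneg fun i _ => sq_nonneg _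
  calc ∑ i, f i * g i ≤ |∑ i, f i * g i| := le_abs_self _
    _ = Real.sqrt ((∑ i, f i * g i) ^ 2) := (Real.sqrt_sq_eq_abs _).symm
    _ ≤ Real.sqrt ((∑ i, f i ^ 2) * ∑ i, g i ^ 2) := Real.sqrt_le_sqrt h
    _ = _ := Real.sqrt_mul h1 _

lemma mw_minkowski {N : ℕ} (f g : Fin N → ℝ) :
    Real.sqrt (∑ i, (f i + g i) ^ 2) ≤ Real.sqrt (∑ i, f i ^ 2) + Real.sqrt (∑ i, g i ^ 2) := by
  have h1 : 0 ≤ ∑ i, f i ^ 2 := Finset.sum_nonneg fun i _ => sq_nonneg _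
  have h2 : 0 ≤ ∑ i, g i ^ 2 := Finset.sum_nonneg fun i _ => sq_nonneg _
  have hc := mw_cauchy f g
  have key : ∑ i, (f i + g i) ^ 2 ≤ (Real.sqrt (∑ i, f i ^ 2) + Real.sqrt (∑ i, g i ^ 2)) ^ 2 := by
    have e1 : ∑ i, (f i + g i) ^ 2 = ∑ i, f i ^ 2 + 2 * ∑ i, f i * g i + ∑ i, g i ^ 2 := by
      rw [Finset.mul_sum, ← Finset.sum_add_distrib, ← Finset.sum_add_distrib]
      exact Finset.sum_congr rfl fun i _ => by ring
    have e2 : (Real.sqrt (∑ i, f i ^ 2) + Real.sqrt (∑ i, g i ^ 2)) ^ 2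
        = ∑ i, f i ^ 2 + 2 * (Real.sqrt (∑ i, f i ^ 2) * Real.sqrt (∑ i, g i ^ 2)) + ∑ i, g i ^ 2 := by
      rw [add_sq, Real.sq_sqrt h1, Real.sq_sqrt h2]; ring
    rw [e1, e2]; linarith
  calc Real.sqrt (∑ i, (f i + g i) ^ 2)
      ≤ Real.sqrt ((Real.sqrt (∑ i, f i ^ 2) + Real.sqrt (∑ i, g i ^ 2)) ^ 2) := Real.sqrt_le_sqrt key
    _ = _ := Real.sqrt_sq (by positivity)


lemma mw_sqrt_weighted_le {N : ℕ} (γ : Fin N → ℝ) (hγ : ∀ i, 0 < γ i) (c d : Fin N → ℝ)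
    (h : ∀ i, γ i * c i ^ 2 ≤ γ i * d i ^ 2) :
    Real.sqrt (∑ i, γ i * c i ^ 2) ≤ Real.sqrt (∑ i, γ i * d i ^ 2) :=
  Real.sqrt_le_sqrt (Finset.sum_le_sum fun i _ => h i)

lemma mw_geom {N : ℕ} (γ Smax Amax : Fin N → ℝ) (hγ : ∀ i, 0 < γ i)
    (hSA : ∀ i, 0 ≤ Smax i ∧ Smax i < Amax i) (x w a : Fin N → ℝ)
    (hx : ∀ i, 0 ≤ x i) (hw : ∀ i, 0 ≤ w i ∧ w i ≤ Smax i)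
    (ha : ∀ i, 0 ≤ a i ∧ a i ≤ Amax i) :
    (∀ i, 0 ≤ max (x i - w i) 0 + a i) ∧
    Real.sqrt (∑ i, γ i * (max (x i - w i) 0 + a i) ^ 2)
      ≤ Real.sqrt (∑ i, γ i * x i ^ 2) + Real.sqrt (∑ i, γ i * Amax i ^ 2) ∧
    Real.sqrt (∑ i, γ i * x i ^ 2)
      ≤ Real.sqrt (∑ i, γ i * (max (x i - w i) 0 + a i) ^ 2)
        + Real.sqrt (∑ i, γ i * Amax i ^ 2) ∧
    (∑ i, γ i * (max (x i - w i) 0 + a i) ^ 2)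
      ≤ (∑ i, γ i * x i ^ 2) + (∑ i, γ i * (Smax i ^ 2 + Amax i ^ 2))
        + 2 * ∑ i, γ i * x i * a i - 2 * ∑ i, γ i * x i * w i := by
  set y : Fin N → ℝ := fun i => max (x i - w i) 0 + a i with hy
  have hy0 : ∀ i, 0 ≤ y i := fun i => add_nonneg (le_max_right _ _) (ha i).1
  have hyub : ∀ i, y i ≤ x i + Amax i := by
    intro i
    have h1 : max (x i - w i) 0 ≤ x i := max_le (by linarith [(hw i).1]) (hx i)
    simp only [hy]
    linarith [(ha i).2]
  refine ⟨hy0, ?_, ?_, ?_⟩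
  · -- upper bound on L y
    have step1 : Real.sqrt (∑ i, γ i * y i ^ 2) ≤ Real.sqrt (∑ i, γ i * (x i + Amax i) ^ 2) :=
      mw_sqrt_weighted_le γ hγ y (fun i => x i + Amax i) (fun i =>
        mul_le_mul_of_nonneg_left (pow_le_pow_left₀ (hy0 i) (hyub i) 2) (hγ i).le)
    have step2 : Real.sqrt (∑ i, γ i * (x i + Amax i) ^ 2)
        ≤ Real.sqrt (∑ i, γ i * x i ^ 2) + Real.sqrt (∑ i, γ i * Amax i ^ 2) := by
      have hmk := mw_minkowski (fun i => Real.sqrt (γ i) * x i) (fun i => Real.sqrt (γ i) * Amax i)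
      have e1 : ∀ z : Fin N → ℝ, ∑ i, (Real.sqrt (γ i) * z i) ^ 2 = ∑ i, γ i * z i ^ 2 := by
        intro z; refine Finset.sum_congr rfl fun i _ => ?_
        rw [mul_pow, Real.sq_sqrt (hγ i).le]
      have e2 : ∑ i, (Real.sqrt (γ i) * x i + Real.sqrt (γ i) * Amax i) ^ 2
          = ∑ i, γ i * (x i + Amax i) ^ 2 := by
        refine Finset.sum_congr rfl fun i _ => ?_
        have : Real.sqrt (γ i) * x i + Real.sqrt (γ i) * Amax i
            = Real.sqrt (γ i) * (x i + Amax i) := by ring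
        rw [this, mul_pow, Real.sq_sqrt (hγ i).le]
      rw [e2, e1, e1] at hmk
      exact hmk
    exact step1.trans step2
  · -- lower bound : L x ≤ L y + B
    set z : Fin N → ℝ := fun i => max (x i - Amax i) 0 with hz
    have hzy : ∀ i, z i ≤ y i := by
      intro i
      have h1 : x i - Amax i ≤ x i - w i := by linarith [(hw i).2, (hSA i).2]
      have h2 : max (x i - Amax i) 0 ≤ max (x i - w i) 0 := max_le_max h1 le_rfl
      simp only [hz, hy]
      linarith [(ha i).1]
    have hz0 : ∀ i, 0 ≤ z i := fun i => le_max_right _ _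
    have hwz : ∀ i, 0 ≤ x i - z i ∧ x i - z i ≤ Amax i := by
      intro i
      rcases le_total (x i - Amax i) 0 with h | h
      · constructor
        · simp only [hz, max_eq_right h]; linarith [hx i]
        · simp only [hz, max_eq_right h]; linarith
      · constructor
        · simp only [hz, max_eq_left h]; linarith [(hSA i).1, (hSA i).2]
        · simp only [hz, max_eq_left h]; linarith [(hSA i).1, (hSA i).2]
    have hmk := mw_minkowski (fun i => Real.sqrt (γ i) * z i)
      (fun i => Real.sqrt (γ i) * (x i - z i))
    have e1 : ∀ zz : Fin N → ℝ, ∑ i, (Real.sqrt (γ i) * zz i) ^ 2 = ∑ i, γ i * zz i ^ 2 := by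
      intro zz; refine Finset.sum_congr rfl fun i _ => ?_
      rw [mul_pow, Real.sq_sqrt (hγ i).le]
    have e2 : ∑ i, (Real.sqrt (γ i) * z i + Real.sqrt (γ i) * (x i - z i)) ^ 2
        = ∑ i, γ i * x i ^ 2 := by
      refine Finset.sum_congr rfl fun i _ => ?_
      have : Real.sqrt (γ i) * z i + Real.sqrt (γ i) * (x i - z i)
          = Real.sqrt (γ i) * x i := by ring
      rw [this, mul_pow, Real.sq_sqrt (hγ i).le]
    rw [e2, e1, e1] at hmk
    have s1 : Real.sqrt (∑ i, γ i * z i ^ 2) ≤ Real.sqrt (∑ i, γ i * y i ^ 2) :=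
      mw_sqrt_weighted_le γ hγ z y (fun i =>
        mul_le_mul_of_nonneg_left (pow_le_pow_left₀ (hz0 i) (hzy i) 2) (hγ i).le)
    have s2 : Real.sqrt (∑ i, γ i * (x i - z i) ^ 2) ≤ Real.sqrt (∑ i, γ i * Amax i ^ 2) :=
      mw_sqrt_weighted_le γ hγ (fun i => x i - z i) Amax (fun i =>
        mul_le_mul_of_nonneg_left (pow_le_pow_left₀ (hwz i).1 (hwz i).2 2) (hγ i).le)
    calc Real.sqrt (∑ i, γ i * x i ^ 2)
        ≤ Real.sqrt (∑ i, γ i * z i ^ 2) + Real.sqrt (∑ i, γ i * (x i - z i) ^ 2) := hmk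
      _ ≤ Real.sqrt (∑ i, γ i * y i ^ 2) + Real.sqrt (∑ i, γ i * Amax i ^ 2) :=
          add_le_add s1 s2
  · -- quadratic expansion bound
    have per : ∀ i, γ i * y i ^ 2
        ≤ γ i * x i ^ 2 + γ i * (Smax i ^ 2 + Amax i ^ 2)
          + 2 * (γ i * x i * a i) - 2 * (γ i * x i * w i) := by
      intro i
      have h1 : max (x i - w i) 0 ≤ x i := max_le (by linarith [(hw i).1]) (hx i)
      have h2 : (max (x i - w i) 0) ^ 2 ≤ (x i - w i) ^ 2 := by
        rcases le_total (x i - w i) 0 with h | h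
        · rw [max_eq_right h]; simpa using sq_nonneg (x i - w i)
        · rw [max_eq_left h]
      have h3 : 0 ≤ max (x i - w i) 0 := le_max_right _ _
      have h4 := (ha i).1
      have h5 := (ha i).2
      have h6 := (hw i).1
      have h7 := (hw i).2
      have h8 := (hSA i).1
      have h9 := hx i
      have hγi := (hγ i).le
      have hua : max (x i - w i) 0 * a i ≤ x i * a i := mul_le_mul_of_nonneg_right h1 h4
      have expand : γ i * y i ^ 2 = γ i * (max (x i - w i) 0) ^ 2
          + 2 * (γ i * (max (x i - w i) 0 * a i)) + γ i * a i ^ 2 := by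
        simp only [hy]; ring
      have h2γ := mul_le_mul_of_nonneg_left h2 hγi
      have huaγ := mul_le_mul_of_nonneg_left hua hγi
      have ha2γ := mul_le_mul_of_nonneg_left (pow_le_pow_left₀ h4 h5 2) hγi
      have hw2γ := mul_le_mul_of_nonneg_left (pow_le_pow_left₀ h6 h7 2) hγi
      nlinarith [h2γ, huaγ, ha2γ, hw2γ, sq_nonneg (Amax i)]
    calc ∑ i, γ i * y i ^ 2
        ≤ ∑ i, (γ i * x i ^ 2 + γ i * (Smax i ^ 2 + Amax i ^ 2)
          + 2 * (γ i * x i * a i) - 2 * (γ i * x i * w i)) := Finset.sum_le_sum fun i _ => per i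
      _ = (∑ i, γ i * x i ^ 2) + (∑ i, γ i * (Smax i ^ 2 + Amax i ^ 2))
          + 2 * ∑ i, γ i * x i * a i - 2 * ∑ i, γ i * x i * w i := by
        rw [Finset.sum_sub_distrib, Finset.sum_add_distrib, Finset.sum_add_distrib,
          ← Finset.mul_sum, ← Finset.mul_sum]

lemma mw_secant {l t r : ℝ} (hl : 0 ≤ l) (hlt : l ≤ t) (htr : t ≤ r) (n : ℕ) :
    t ^ (n+2) ≤ l ^ (n+2) + (n+2) * r ^ (n+1) * (t - l) := by
  have h := mw_pow_ub hl hlt (n+1)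
  push_cast at h
  have ht : t ^ (n+1) ≤ r ^ (n+1) := pow_le_pow_left₀ (hl.trans hlt) htr _
  have h2 : t ^ (n+1) * (t - l) ≤ r ^ (n+1) * (t - l) :=
    mul_le_mul_of_nonneg_right ht (sub_nonneg.2 hlt)
  have h3 : ((n:ℝ)+2) * (t ^ (n+1) * (t - l)) ≤ ((n:ℝ)+2) * (r ^ (n+1) * (t - l)) :=
    mul_le_mul_of_nonneg_left h2 (by positivity)
  push_cast
  nlinarith [h, h3]

lemma mw_drift_real {B ε3 : ℝ} (hB : 0 < B) (hε3 : 0 < ε3) (hε3B : ε3 ≤ B) (n : ℕ) {L : ℝ}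
    (hL1 : B + 1 ≤ L)
    (hL2 : 2/ε3 * ((n+2) * (B^2*2^(n+1) + B^2)) ≤ L) :
    (L-B)^(n+2) + (n+2)*(L+B)^(n+1)*(B-ε3) ≤ L^(n+2) - ((n+2)*ε3/2)*L^(n+1) := by
  have hLB : 0 ≤ L - B := by linarith
  have hL0 : (0:ℝ) < L := by linarith
  have hLn : (0:ℝ) ≤ L ^ n := pow_nonneg hL0.le n
  have hBε : 0 ≤ B - ε3 := by linarith
  have h1 := mw_pow_lb hLB (by linarith : L - B ≤ L) (n+1)
  have h2 := mw_pow_ub hL0.le (by linarith : L ≤ L + B) n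
  have h3 := mw_pow_ub hLB (by linarith : L - B ≤ L) n
  push_cast at h1 h2 h3
  have h2' : (L+B)^n ≤ 2^n * L^n := by
    have := pow_le_pow_left₀ (by linarith : (0:ℝ) ≤ L + B) (by linarith : L + B ≤ 2*L) n
    calc (L+B)^n ≤ (2*L)^n := this
      _ = 2^n * L^n := mul_pow 2 L n
  -- coefficient inequality
  have hco : (B-ε3)*((n+1)*2^n*B) + (n+1)*B^2 ≤ (n+2)*(B^2*2^(n+1) + B^2) := by
    have h2n : (1:ℝ) ≤ 2^n := one_le_pow₀ (by norm_num)
    have e : (2:ℝ)^(n+1) = 2 * 2^n := by ring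
    have hn1 : ((n:ℝ)+1) ≤ (n:ℝ)+2 := by linarith
    have hBB : (B-ε3)*B ≤ B^2 := by nlinarith
    rw [e]
    nlinarith [mul_nonneg (mul_nonneg (by positivity : (0:ℝ) ≤ (n:ℝ)+1) (by positivity : (0:ℝ) ≤ (2:ℝ)^n)) (sq_nonneg B),
      mul_le_mul_of_nonneg_left hBB (by positivity : (0:ℝ) ≤ ((n:ℝ)+1)*2^n),
      mul_nonneg (by positivity : (0:ℝ) ≤ (2:ℝ)^n) (sq_nonneg B), sq_nonneg B]
  have P1 : ((n:ℝ)+2)*(B^2*2^(n+1) + B^2) * L^n ≤ (ε3/2)*L^(n+1) := by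
    have hh : ((n:ℝ)+2)*(B^2*2^(n+1) + B^2) ≤ (ε3/2)*L := by
      have h' := mul_le_mul_of_nonneg_left hL2 (by positivity : (0:ℝ) ≤ ε3/2)
      have e' : (ε3/2) * (2/ε3 * (((n:ℝ)+2)*(B^2*2^(n+1)+B^2)))
          = ((n:ℝ)+2)*(B^2*2^(n+1)+B^2) := by
        field_simp
      rw [e'] at h'
      exact h' 
    calc ((n:ℝ)+2)*(B^2*2^(n+1) + B^2) * L^n ≤ ((ε3/2)*L) * L^n :=
          mul_le_mul_of_nonneg_right hh hLn
      _ = (ε3/2)*L^(n+1) := by ring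
  have keyd : (L+B)^(n+1)*(B-ε3) ≤ (L-B)^(n+1)*B - (ε3/2)*L^(n+1) := by
    have s1 : (L+B)^(n+1)*(B-ε3) ≤ (L^(n+1) + ((n:ℝ)+1)*(2^n*L^n)*B)*(B-ε3) := by
      apply mul_le_mul_of_nonneg_right _ hBε
      have := mul_le_mul_of_nonneg_right h2' (by positivity : (0:ℝ) ≤ ((n:ℝ)+1)*B)
      nlinarith [h2]
    have s2 : (L^(n+1) - ((n:ℝ)+1)*L^n*B)*B ≤ (L-B)^(n+1)*B := by
      apply mul_le_mul_of_nonneg_right _ hB.le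
      nlinarith [h3]
    have s3 : (L^(n+1) + ((n:ℝ)+1)*(2^n*L^n)*B)*(B-ε3)
        ≤ (L^(n+1) - ((n:ℝ)+1)*L^n*B)*B - (ε3/2)*L^(n+1) := by
      have expand : (L^(n+1) - ((n:ℝ)+1)*L^n*B)*B - (ε3/2)*L^(n+1)
          - (L^(n+1) + ((n:ℝ)+1)*(2^n*L^n)*B)*(B-ε3)
          = (ε3/2)*L^(n+1) - (((B-ε3)*(((n:ℝ)+1)*2^n*B) + ((n:ℝ)+1)*B^2) * L^n) := by
        ring
      have hc := mul_le_mul_of_nonneg_right hco hLn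
      linarith [P1, hc]
    linarith
  have key : ((n:ℝ)+2)*((L+B)^(n+1)*(B-ε3))
      ≤ ((n:ℝ)+2)*((L-B)^(n+1)*B - (ε3/2)*L^(n+1)) :=
    mul_le_mul_of_nonneg_left keyd (by positivity)
  push_cast
  nlinarith [h1, key]


lemma mw_invariant_bound {X : Type*} [MeasurableSpace X] (Γ : Measure X) [IsProbabilityMeasure Γ]
    (P : X → Measure X) (hP : Measurable P) (hinv : Γ.bind P = Γ)
    (g h : X → ℝ≥0∞) (hg : Measurable g) (hgfin : ∀ x, g x ≠ ⊤) (hh : Measurable h)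
    (b : ℝ≥0∞)
    (hdrift : ∀ᵐ x ∂Γ, (∫⁻ y, g y ∂(P x)) + h x ≤ g x + b)
    (hPprob : ∀ᵐ x ∂Γ, P x Set.univ = 1) :
    ∫⁻ x, h x ∂Γ ≤ b := by
  set gn : ℕ → X → ℝ≥0∞ := fun n y => min (g y) n with hgn
  have hgnmeas : ∀ n, Measurable (gn n) := fun n => hg.min measurable_const
  have hSmeas : ∀ n : ℕ, MeasurableSet {x | g x ≤ (n : ℝ≥0∞)} :=
    fun n => measurableSet_le hg measurable_const
  have hindmeas : ∀ n : ℕ, Measurable (Set.indicator {x | g x ≤ (n : ℝ≥0∞)} h) :=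
    fun n => hh.indicator (hSmeas n)
  have bound : ∀ n : ℕ, ∫⁻ x, Set.indicator {x | g x ≤ (n : ℝ≥0∞)} h x ∂Γ ≤ b := by
    intro n
    have key : ∀ᵐ x ∂Γ, (∫⁻ y, gn n y ∂(P x)) + Set.indicator {x | g x ≤ (n : ℝ≥0∞)} h x
        ≤ gn n x + b := by
      filter_upwards [hdrift, hPprob] with x hd hpu
      by_cases hx : g x ≤ (n : ℝ≥0∞)
      · rw [Set.indicator_of_mem (show x ∈ {x | g x ≤ (n : ℝ≥0∞)} from hx) h]
        have h1 : (∫⁻ y, gn n y ∂(P x)) ≤ ∫⁻ y, g y ∂(P x) :=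
          lintegral_mono fun y => min_le_left _ _
        have h2 : gn n x = g x := min_eq_left hx
        rw [h2]
        exact le_trans (add_le_add_left h1 _) hd
      · rw [Set.indicator_of_notMem (show x ∉ {x | g x ≤ (n : ℝ≥0∞)} from hx) h, add_zero]
        have h2 : gn n x = (n : ℝ≥0∞) := min_eq_right (le_of_lt (lt_of_not_ge hx))
        have h1 : (∫⁻ y, gn n y ∂(P x)) ≤ ∫⁻ _, (n : ℝ≥0∞) ∂(P x) :=
          lintegral_mono fun y => min_le_right _ _
        rw [lintegral_const, hpu, mul_one] at h1
        rw [h2]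
        exact le_trans h1 le_self_add
    have hint : ∫⁻ x, (∫⁻ y, gn n y ∂(P x)) ∂Γ = ∫⁻ x, gn n x ∂Γ := by
      rw [← Measure.lintegral_bind hP.aemeasurable (hgnmeas n).aemeasurable, hinv]
    have main : (∫⁻ x, gn n x ∂Γ) + ∫⁻ x, Set.indicator {x | g x ≤ (n : ℝ≥0∞)} h x ∂Γ
        ≤ (∫⁻ x, gn n x ∂Γ) + b := by
      calc (∫⁻ x, gn n x ∂Γ) + ∫⁻ x, Set.indicator {x | g x ≤ (n : ℝ≥0∞)} h x ∂Γ
          = ∫⁻ x, (∫⁻ y, gn n y ∂(P x)) + Set.indicator {x | g x ≤ (n : ℝ≥0∞)} h x ∂Γ := by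
            rw [lintegral_add_right _ (hindmeas n), hint]
        _ ≤ ∫⁻ x, (gn n x + b) ∂Γ := lintegral_mono_ae key
        _ = (∫⁻ x, gn n x ∂Γ) + b := by
            rw [lintegral_add_right _ measurable_const, lintegral_const,
              measure_univ, mul_one]
    have hfin : (∫⁻ x, gn n x ∂Γ) ≠ ⊤ := by
      have : (∫⁻ x, gn n x ∂Γ) ≤ (n : ℝ≥0∞) := by
        calc (∫⁻ x, gn n x ∂Γ) ≤ ∫⁻ _, (n : ℝ≥0∞) ∂Γ := lintegral_mono fun y => min_le_right _ _
          _ = n := by rw [lintegral_const, measure_univ, mul_one]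
      exact ne_top_of_le_ne_top (ENNReal.natCast_ne_top n) this
    exact (ENNReal.add_le_add_iff_left hfin).mp main
  have hsup : ∀ x, (⨆ n : ℕ, Set.indicator {x | g x ≤ (n : ℝ≥0∞)} h x) = h x := by
    intro x
    obtain ⟨n, hn⟩ := ENNReal.exists_nat_gt (hgfin x)
    apply le_antisymm
    · exact iSup_le fun m => Set.indicator_le_self _ _ x
    · exact le_iSup_of_le n (by rw [Set.indicator_of_mem (show x ∈ {x | g x ≤ (n : ℝ≥0∞)} from hn.le) h])
  have hmono : Monotone fun n : ℕ => Set.indicator {x | g x ≤ (n : ℝ≥0∞)} h := by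
    intro n m hnm
    apply Set.indicator_le_indicator_of_subset
    · intro x hx
      exact Set.mem_setOf.mpr (le_trans (Set.mem_setOf.mp hx) (Nat.cast_le.mpr hnm))
    · intro a; exact zero_le
  calc ∫⁻ x, h x ∂Γ = ∫⁻ x, ⨆ n : ℕ, Set.indicator {x | g x ≤ (n : ℝ≥0∞)} h x ∂Γ := by
        simp_rw [hsup]
    _ = ⨆ n : ℕ, ∫⁻ x, Set.indicator {x | g x ≤ (n : ℝ≥0∞)} h x ∂Γ :=
        lintegral_iSup hindmeas hmono
    _ ≤ b := iSup_le bound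


set_option maxHeartbeats 1000000 in
/-- All moments of any invariant probability measure of the MaxWeight queue
chain of a generalized switch are finite, provided the arrival-rate vector `λ` lies in the
interior of the rate region `V`. -/
theorem maxweight_invariant_moments_finite (N K : ℕ)
    (γ : Fin N → ℝ) (hγ : ∀ i, 0 < γ i)
    (Smax Amax : Fin N → ℝ) (hSA : ∀ i, 0 ≤ Smax i ∧ Smax i < Amax i)
    (O : Fin K → ℕ)
    (v : (k : Fin K) → Fin (O k) → Fin N → ℝ)
    (hv : ∀ k j i, 0 ≤ v k j i ∧ v k j i ≤ Smax i)
    (p : (k : Fin K) → Fin (O k) → ℝ)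
    (hp : ∀ k j, 0 ≤ p k j) (hp1 : ∀ k, ∑ j, p k j = 1)
    (μvec : Fin K → Fin N → ℝ) (hμdef : ∀ k i, μvec k i = ∑ j, p k j * v k j i)
    (hμ0 : ∀ k, μvec k ≠ 0) (hμdist : Function.Injective μvec)
    (δlow δhigh : ℝ) (hδ0 : 0 < δlow) (hδ : δlow ≤ δhigh)
    (f : (Fin N → ℝ) → ℝ≥0∞) (hfmeas : Measurable f)
    (hsupp : ∀ x : Fin N → ℝ, ¬(∀ i, 0 ≤ x i ∧ x i ≤ Amax i) → f x = 0)
    (hfbound : ∀ᵐ x ∂(volume : Measure (Fin N → ℝ)),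
      (∀ i, 0 ≤ x i ∧ x i ≤ Amax i) →
        ENNReal.ofReal δlow ≤ f x ∧ f x ≤ ENNReal.ofReal δhigh)
    (hprob : ∫⁻ x, f x ∂(volume : Measure (Fin N → ℝ)) = 1)
    (lam : Fin N → ℝ) (hlam : ∀ i, lam i = ∫ x, x i ∂(volume.withDensity f))
    (ksel : (Fin N → ℝ) → Fin K) (hkselmeas : Measurable ksel)
    (hksel : ∀ x : Fin N → ℝ, (∀ i, 0 ≤ x i) →
      ∀ l, ∑ i, γ i * x i * μvec l i ≤ ∑ i, γ i * x i * μvec (ksel x) i)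
    (Pker : (Fin N → ℝ) → Measure (Fin N → ℝ))
    (hPker : ∀ x, Pker x = ∑ j : Fin (O (ksel x)),
      ENNReal.ofReal (p (ksel x) j) •
        Measure.map (fun a : Fin N → ℝ => fun i => max (x i - v (ksel x) j i) 0 + a i)
          (volume.withDensity f))
    (hV : lam ∈ interior {x : Fin N → ℝ | (∀ i, 0 ≤ x i) ∧
      ∃ ψ : Fin K → ℝ, (∀ k, 0 ≤ ψ k) ∧ ∑ k, ψ k = 1 ∧
        ∀ i, x i ≤ ∑ k, ψ k * μvec k i}) :
    ∀ Γ : Measure (Fin N → ℝ), IsProbabilityMeasure Γ →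
      Γ {x | ¬∀ i, 0 ≤ x i} = 0 →
      (∀ A : Set (Fin N → ℝ), MeasurableSet A → Γ A = ∫⁻ x, Pker x A ∂Γ) →
      ∀ r : ℝ, 0 < r →
        ∫⁻ x, ENNReal.ofReal (Real.sqrt (∑ i, x i ^ 2) ^ r) ∂Γ < ⊤ := by
  intro Γ hΓprob hΓ0 hinv r hr
  classical
  -- lam is in the rate region; in particular K ≠ 0
  obtain ⟨hlam0mem, ψ0, hψ00, hψ0sum, hψ0le⟩ := interior_subset hV
  -- dispose of the degenerate case N = 0
  rcases Nat.eq_zero_or_pos N with hN0 | hNpos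
  · exfalso
    have hK : K ≠ 0 := by
      intro hK0
      subst hK0
      simp at hψ0sum
    subst hN0
    exact hμ0 ⟨0, Nat.pos_of_ne_zero hK⟩ (funext fun i => i.elim0)
  -- basic notation
  set ν : Measure (Fin N → ℝ) := volume.withDensity f with hνdef
  set Qf : (Fin N → ℝ) → ℝ := fun x => ∑ i, γ i * x i ^ 2 with hQfdef
  set Lf : (Fin N → ℝ) → ℝ := fun x => Real.sqrt (Qf x) with hLfdef
  have hQf0 : ∀ x, 0 ≤ Qf x := fun x =>
    Finset.sum_nonneg fun i _ => mul_nonneg (hγ i).le (sq_nonneg _)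
  have hLf0 : ∀ x, 0 ≤ Lf x := fun x => Real.sqrt_nonneg _
  have hLfsq : ∀ x, Lf x ^ 2 = Qf x := fun x => Real.sq_sqrt (hQf0 x)
  have hQfcont : Continuous Qf :=
    continuous_finset_sum _ fun i _ => continuous_const.mul ((continuous_apply i).pow 2)
  have hLfcont : Continuous Lf := Real.continuous_sqrt.comp hQfcont
  have hLfmeas : Measurable Lf := hLfcont.measurable
  -- the minimal weight
  obtain ⟨im, _, him⟩ :=
    Finset.exists_min_image Finset.univ γ ⟨⟨0, hNpos⟩, Finset.mem_univ _⟩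
  have himle : ∀ i, γ im ≤ γ i := fun i => him i (Finset.mem_univ i)
  -- ν is a probability measure
  have hν1 : ν Set.univ = 1 := by
    rw [hνdef, withDensity_apply _ MeasurableSet.univ, setLIntegral_univ]
    exact hprob
  haveI hνprob : IsProbabilityMeasure ν := ⟨hν1⟩
  -- the support box
  set boxSet : Set (Fin N → ℝ) := {a | ∀ i, 0 ≤ a i ∧ a i ≤ Amax i} with hboxdef
  have hboxmeas : MeasurableSet boxSet := by
    have : boxSet = ⋂ i, (fun a : Fin N → ℝ => a i) ⁻¹' (Set.Icc 0 (Amax i)) := by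
      ext a
      simp [hboxdef, Set.mem_iInter, Set.mem_Icc]
    rw [this]
    exact MeasurableSet.iInter fun i => (measurable_pi_apply i) measurableSet_Icc
  have hbox : ∀ᵐ a ∂ν, a ∈ boxSet := by
    rw [ae_iff]
    have h1 : ν boxSetᶜ = ∫⁻ a in boxSetᶜ, f a ∂volume := by
      rw [hνdef, withDensity_apply _ hboxmeas.compl]
    rw [show {a | ¬a ∈ boxSet} = boxSetᶜ from rfl, h1]
    calc ∫⁻ a in boxSetᶜ, f a ∂volume = ∫⁻ _ in boxSetᶜ, 0 ∂volume :=
          setLIntegral_congr_fun hboxmeas.compl (fun a ha => hsupp a ha)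
      _ = 0 := by simp
  -- integrability and the arrival mean
  have hInt : ∀ i, Integrable (fun a : Fin N → ℝ => a i) ν := by
    intro i
    refine (integrable_const (Amax i)).mono' (measurable_pi_apply i).aestronglyMeasurable ?_
    filter_upwards [hbox] with a ha
    rw [Real.norm_eq_abs, abs_of_nonneg (ha i).1]
    exact (ha i).2
  have hlam0 : ∀ i, 0 ≤ lam i := by
    intro i
    rw [hlam i]
    exact integral_nonneg_of_ae (hbox.mono fun a ha => (ha i).1)
  have hlamlint : ∀ i, ∫⁻ a, ENNReal.ofReal (a i) ∂ν = ENNReal.ofReal (lam i) := by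
    intro i
    rw [hlam i]
    exact (ofReal_integral_eq_lintegral_ofReal (hInt i) (hbox.mono fun a ha => (ha i).1)).symm
  -- the separation constant from interiority
  obtain ⟨δ, hδpos, hball⟩ := Metric.mem_nhds_iff.mp (mem_interior_iff_mem_nhds.mp hV)
  set εs : ℝ := δ / 2 * Real.sqrt (γ im) with hεsdef
  have hεspos : 0 < εs := by
    apply mul_pos (by linarith) (Real.sqrt_pos.mpr (hγ im))
  have hsep : ∀ x : Fin N → ℝ, (∀ i, 0 ≤ x i) →
      ∑ i, γ i * x i * lam i + εs * Lf x ≤ ∑ i, γ i * x i * μvec (ksel x) i := by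
    intro x hx
    set u : Fin N → ℝ := fun i => γ i * x i with hudef
    have hu0 : ∀ i, 0 ≤ u i := fun i => mul_nonneg (hγ i).le (hx i)
    have huγ : ∀ l, ∑ i, u i * μvec l i = ∑ i, γ i * x i * μvec l i := by
      intro l; rfl
    have hulam : ∑ i, u i * lam i = ∑ i, γ i * x i * lam i := rfl
    by_cases hQ : Qf x = 0
    · have hx0 : ∀ i, x i = 0 := by
        intro i
        have h := (Finset.sum_eq_zero_iff_of_nonneg
          (fun i _ => mul_nonneg (hγ i).le (sq_nonneg (x i)))).mp hQ i (Finset.mem_univ i)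
        have := hγ i
        have hx2 : x i ^ 2 = 0 := by
          by_contra hne
          have : 0 < x i ^ 2 := lt_of_le_of_ne (sq_nonneg _) (Ne.symm hne)
          nlinarith
        exact pow_eq_zero_iff (n := 2) (by norm_num) |>.mp hx2
      have e1 : ∑ i, γ i * x i * lam i = 0 :=
        Finset.sum_eq_zero fun i _ => by rw [hx0 i]; ring
      have e2 : ∑ i, γ i * x i * μvec (ksel x) i = 0 :=
        Finset.sum_eq_zero fun i _ => by rw [hx0 i]; ring
      have e3 : Lf x = 0 := by rw [hLfdef]; simp [hQ]
      rw [e1, e2, e3, mul_zero, add_zero]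
    · have hQpos : 0 < Qf x := lt_of_le_of_ne (hQf0 x) (Ne.symm hQ)
      set nu : ℝ := Real.sqrt (∑ i, u i ^ 2) with hnudef
      have hsum2 : γ im * Qf x ≤ ∑ i, u i ^ 2 := by
        rw [hQfdef, Finset.mul_sum]
        refine Finset.sum_le_sum fun i _ => ?_
        have h1 : γ im * (γ i * x i ^ 2) ≤ γ i * (γ i * x i ^ 2) :=
          mul_le_mul_of_nonneg_right (himle i) (mul_nonneg (hγ i).le (sq_nonneg _))
        calc γ im * (γ i * x i ^ 2) ≤ γ i * (γ i * x i ^ 2) := h1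
          _ = u i ^ 2 := by rw [hudef]; ring
      have hnu2pos : 0 < ∑ i, u i ^ 2 :=
        lt_of_lt_of_le (mul_pos (hγ im) hQpos) hsum2
      have hnupos : 0 < nu := Real.sqrt_pos.mpr hnu2pos
      have hnusq : nu ^ 2 = ∑ i, u i ^ 2 := Real.sq_sqrt hnu2pos.le
      have hnuQ : Real.sqrt (γ im) * Lf x ≤ nu := by
        rw [hLfdef, ← Real.sqrt_mul (hγ im).le]
        exact Real.sqrt_le_sqrt hsum2
      set lam' : Fin N → ℝ := fun i => lam i + δ / 2 * (u i / nu) with hlam'def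
      have hui_le : ∀ i, u i ≤ nu := by
        intro i
        have h1 : u i ^ 2 ≤ ∑ i, u i ^ 2 :=
          Finset.single_le_sum (fun i _ => sq_nonneg (u i)) (Finset.mem_univ i)
        calc u i = Real.sqrt (u i ^ 2) := (Real.sqrt_sq (hu0 i)).symm
          _ ≤ nu := Real.sqrt_le_sqrt h1
      have hmem : lam' ∈ Metric.ball lam δ := by
        rw [Metric.mem_ball, dist_pi_lt_iff hδpos]
        intro i
        rw [Real.dist_eq]
        have h1 : 0 ≤ u i / nu := div_nonneg (hu0 i) hnupos.le
        have h2 : u i / nu ≤ 1 := (div_le_one hnupos).mpr (hui_le i)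
        have : |lam' i - lam i| = δ / 2 * (u i / nu) := by
          rw [hlam'def]
          simp only [add_sub_cancel_left]
          rw [abs_of_nonneg (by positivity)]
        rw [this]
        nlinarith
      obtain ⟨_, ψ, hψ0, hψ1, hψle⟩ := hball hmem
      have key1 : ∑ i, u i * lam' i ≤ ∑ i, u i * μvec (ksel x) i := by
        calc ∑ i, u i * lam' i
            ≤ ∑ i, u i * (∑ k, ψ k * μvec k i) :=
              Finset.sum_le_sum fun i _ => mul_le_mul_of_nonneg_left (hψle i) (hu0 i)
          _ = ∑ k, ψ k * ∑ i, u i * μvec k i := by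
              simp_rw [Finset.mul_sum]
              rw [Finset.sum_comm]
              exact Finset.sum_congr rfl fun k _ => Finset.sum_congr rfl fun i _ => by ring
          _ ≤ ∑ k, ψ k * ∑ i, u i * μvec (ksel x) i := by
              refine Finset.sum_le_sum fun k _ => mul_le_mul_of_nonneg_left ?_ (hψ0 k)
              rw [huγ k, huγ (ksel x)]
              exact hksel x hx k
          _ = ∑ i, u i * μvec (ksel x) i := by rw [← Finset.sum_mul, hψ1, one_mul]
      have hnune : nu ≠ 0 := hnupos.ne'
      have key2 : ∑ i, u i * lam' i = ∑ i, u i * lam i + δ / 2 * nu := by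
        have e1 : ∑ i, u i * lam' i = ∑ i, (u i * lam i + δ / 2 / nu * u i ^ 2) := by
          refine Finset.sum_congr rfl fun i _ => ?_
          rw [hlam'def]
          field_simp
        rw [e1, Finset.sum_add_distrib, ← Finset.mul_sum, ← hnusq]
        congr 1
        field_simp
      have key3 : εs * Lf x ≤ δ / 2 * nu := by
        rw [hεsdef]
        calc δ / 2 * Real.sqrt (γ im) * Lf x = δ / 2 * (Real.sqrt (γ im) * Lf x) := by ring
          _ ≤ δ / 2 * nu := mul_le_mul_of_nonneg_left hnuQ (by linarith)
      rw [← hulam, ← huγ (ksel x)]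
      linarith [key1, key2, key3]

  -- constants
  set B : ℝ := Real.sqrt (∑ i, γ i * Amax i ^ 2) with hBdef
  have hBpos : 0 < B := by
    apply Real.sqrt_pos.mpr
    have h0 : 0 < γ ⟨0, hNpos⟩ * Amax ⟨0, hNpos⟩ ^ 2 := by
      have h1 := (hSA ⟨0, hNpos⟩).1
      have h2 := (hSA ⟨0, hNpos⟩).2
      have h3 := hγ ⟨0, hNpos⟩
      have h4 : 0 < Amax ⟨0, hNpos⟩ := lt_of_le_of_lt h1 h2
      exact mul_pos h3 (pow_pos h4 2)
    calc (0:ℝ) < γ ⟨0, hNpos⟩ * Amax ⟨0, hNpos⟩ ^ 2 := h0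
      _ ≤ ∑ i, γ i * Amax i ^ 2 :=
        Finset.single_le_sum (fun i _ => mul_nonneg (hγ i).le (sq_nonneg _)) (Finset.mem_univ _)
  set C0 : ℝ := ∑ i, γ i * (Smax i ^ 2 + Amax i ^ 2) with hC0def
  have hC00 : 0 ≤ C0 :=
    Finset.sum_nonneg fun i _ => mul_nonneg (hγ i).le
      (add_nonneg (sq_nonneg _) (sq_nonneg _))
  set ε3 : ℝ := min (εs / 2) B with hε3def
  have hε3pos : 0 < ε3 := lt_min (by linarith) hBpos
  have hε3B : ε3 ≤ B := min_le_right _ _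
  have hε3s : ε3 ≤ εs / 2 := min_le_left _ _
  set M0 : ℝ := C0 / εs + ε3 + B + 1 with hM0def
  have hM0B : B + 1 ≤ M0 := by
    have : 0 ≤ C0 / εs := div_nonneg hC00 hεspos.le
    simp only [hM0def]
    linarith [hε3pos]
  -- kernel integration formula
  have hTmeas : ∀ (x : Fin N → ℝ) (k : Fin K) (j : Fin (O k)),
      Measurable (fun a : Fin N → ℝ => fun i => max (x i - v k j i) 0 + a i) :=
    fun x k j => measurable_pi_lambda _ fun i => (measurable_pi_apply i).const_add _
  have hPint : ∀ (x : Fin N → ℝ) (F : (Fin N → ℝ) → ℝ≥0∞), Measurable F →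
      ∫⁻ y, F y ∂(Pker x) = ∑ j : Fin (O (ksel x)), ENNReal.ofReal (p (ksel x) j) *
        ∫⁻ a, F (fun i => max (x i - v (ksel x) j i) 0 + a i) ∂ν := by
    intro x F hF
    rw [hPker x, lintegral_finset_sum_measure]
    exact Finset.sum_congr rfl fun j _ => by
      rw [lintegral_smul_measure, lintegral_map hF (hTmeas x (ksel x) j), smul_eq_mul]
  have hPuniv : ∀ x, Pker x Set.univ = 1 := by
    intro x
    have h1 : ∫⁻ _, (1 : ℝ≥0∞) ∂(Pker x) = Pker x Set.univ := lintegral_one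
    rw [← h1, hPint x _ measurable_const]
    have : ∀ j : Fin (O (ksel x)), ENNReal.ofReal (p (ksel x) j) *
        ∫⁻ _, (1:ℝ≥0∞) ∂ν = ENNReal.ofReal (p (ksel x) j) := by
      intro j
      rw [lintegral_one, measure_univ, mul_one]
    rw [Finset.sum_congr rfl fun j _ => this j,
      ← ENNReal.ofReal_sum_of_nonneg fun j _ => hp (ksel x) j, hp1 (ksel x)]
    exact ENNReal.ofReal_one
  -- a.e. statements under the kernel
  have haeP : ∀ (x : Fin N → ℝ) (S : Set (Fin N → ℝ)), MeasurableSet S →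
      (∀ (j : Fin (O (ksel x))) a, a ∈ boxSet →
        (fun i => max (x i - v (ksel x) j i) 0 + a i) ∈ S) →
      ∀ᵐ y ∂(Pker x), y ∈ S := by
    intro x S hS hgood
    rw [ae_iff]
    have h0 : {y | ¬ y ∈ S} = Sᶜ := rfl
    rw [h0, hPker x, Measure.finset_sum_apply]
    apply Finset.sum_eq_zero
    intro j _
    rw [Measure.smul_apply, Measure.map_apply (hTmeas x (ksel x) j) hS.compl]
    have hboxnull : ν boxSetᶜ = 0 := by
      have := hbox
      rw [ae_iff] at this
      exact this
    have hsub : ((fun a : Fin N → ℝ => fun i => max (x i - v (ksel x) j i) 0 + a i) ⁻¹' Sᶜ)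
        ⊆ boxSetᶜ := by
      intro a ha
      simp only [Set.mem_preimage, Set.mem_compl_iff] at ha ⊢
      intro hbx
      exact ha (hgood j a hbx)
    rw [measure_mono_null hsub hboxnull, smul_zero]
  -- quadratic drift
  have D1 : ∀ x : Fin N → ℝ, (∀ i, 0 ≤ x i) →
      ∫⁻ y, ENNReal.ofReal (Qf y) ∂(Pker x)
        ≤ ENNReal.ofReal (Qf x + C0 - 2 * εs * Lf x) := by
    intro x hx
    have hQmeas : Measurable fun y : Fin N → ℝ => ENNReal.ofReal (Qf y) :=
      hQfcont.measurable.ennreal_ofReal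
    rw [hPint x _ hQmeas]
    set slam : ℝ := ∑ i, γ i * x i * lam i with hslamdef
    have hslam0 : 0 ≤ slam := Finset.sum_nonneg fun i _ =>
      mul_nonneg (mul_nonneg (hγ i).le (hx i)) (hlam0 i)
    have hmeasS : Measurable fun a : Fin N → ℝ => ENNReal.ofReal (∑ i, γ i * x i * a i) :=
      (continuous_finset_sum _ fun i _ =>
        continuous_const.mul (continuous_apply i)).measurable.ennreal_ofReal
    have hintlam : ∫⁻ a, ENNReal.ofReal (∑ i, γ i * x i * a i) ∂ν = ENNReal.ofReal slam := by
      have hmeasi : ∀ i : Fin N, Measurable fun a : Fin N → ℝ =>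
          ENNReal.ofReal (γ i * x i * a i) :=
        fun i => ((measurable_pi_apply i).const_mul _).ennreal_ofReal
      calc ∫⁻ a, ENNReal.ofReal (∑ i, γ i * x i * a i) ∂ν
          = ∫⁻ a, ∑ i, ENNReal.ofReal (γ i * x i * a i) ∂ν := by
            apply lintegral_congr_ae
            filter_upwards [hbox] with a ha
            exact ENNReal.ofReal_sum_of_nonneg fun i _ =>
              mul_nonneg (mul_nonneg (hγ i).le (hx i)) (ha i).1
        _ = ∑ i, ∫⁻ a, ENNReal.ofReal (γ i * x i * a i) ∂ν :=
            lintegral_finset_sum _ fun i _ => hmeasi i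
        _ = ∑ i, ENNReal.ofReal (γ i * x i * lam i) := by
            refine Finset.sum_congr rfl fun i _ => ?_
            have e : ∀ a : Fin N → ℝ, ENNReal.ofReal (γ i * x i * a i)
                = ENNReal.ofReal (γ i * x i) * ENNReal.ofReal (a i) := fun a =>
              ENNReal.ofReal_mul (mul_nonneg (hγ i).le (hx i))
            simp_rw [e]
            rw [lintegral_const_mul _ (measurable_pi_apply i).ennreal_ofReal, hlamlint i,
              ← ENNReal.ofReal_mul (mul_nonneg (hγ i).le (hx i))]
        _ = ENNReal.ofReal slam := (ENNReal.ofReal_sum_of_nonneg fun i _ =>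
              mul_nonneg (mul_nonneg (hγ i).le (hx i)) (hlam0 i)).symm
    have hc1all : ∀ j : Fin (O (ksel x)),
        0 ≤ Qf x + C0 - 2 * ∑ i, γ i * x i * v (ksel x) j i := by
      intro j
      have per : ∀ i ∈ Finset.univ (α := Fin N), 2 * (γ i * x i * v (ksel x) j i)
          ≤ γ i * x i ^ 2 + γ i * (Smax i ^ 2 + Amax i ^ 2) := by
        intro i _
        have h1 := (hv (ksel x) j i).1; have h2 := (hv (ksel x) j i).2
        have h3 := (hSA i).1; have h4 := (hSA i).2; have h5 := hx i
        have h6 := (hγ i).le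
        nlinarith [mul_nonneg h6 (sq_nonneg (x i - v (ksel x) j i)),
          mul_nonneg h6 (sq_nonneg (Amax i)),
          mul_le_mul_of_nonneg_left (pow_le_pow_left₀ h1 h2 2) h6]
      have hsum := Finset.sum_le_sum per
      rw [Finset.sum_add_distrib] at hsum
      have e2 : ∑ i, 2 * (γ i * x i * v (ksel x) j i)
          = 2 * ∑ i, γ i * x i * v (ksel x) j i := by
        rw [Finset.mul_sum]
      rw [e2] at hsum
      rw [hQfdef, hC0def]
      linarith
    have hj : ∀ j : Fin (O (ksel x)),
        ∫⁻ a, ENNReal.ofReal (Qf (fun i => max (x i - v (ksel x) j i) 0 + a i)) ∂ν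
          ≤ ENNReal.ofReal (Qf x + C0 - 2 * (∑ i, γ i * x i * v (ksel x) j i) + 2 * slam) := by
      intro j
      have hwb : ∀ i, 0 ≤ v (ksel x) j i ∧ v (ksel x) j i ≤ Smax i := fun i => hv (ksel x) j i
      have hc10 := hc1all j
      have hptwise : ∀ᵐ a ∂ν, ENNReal.ofReal (Qf (fun i => max (x i - v (ksel x) j i) 0 + a i))
          ≤ ENNReal.ofReal (Qf x + C0 - 2 * (∑ i, γ i * x i * v (ksel x) j i))
            + ENNReal.ofReal 2 * ENNReal.ofReal (∑ i, γ i * x i * a i) := by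
        filter_upwards [hbox] with a ha
        have hg := (mw_geom γ Smax Amax hγ hSA x (v (ksel x) j) a hx hwb ha).2.2.2
        have ha0 : 0 ≤ ∑ i, γ i * x i * a i := Finset.sum_nonneg fun i _ =>
          mul_nonneg (mul_nonneg (hγ i).le (hx i)) (ha i).1
        calc ENNReal.ofReal (Qf (fun i => max (x i - v (ksel x) j i) 0 + a i))
            ≤ ENNReal.ofReal ((Qf x + C0 - 2 * (∑ i, γ i * x i * v (ksel x) j i))
                + 2 * ∑ i, γ i * x i * a i) := by
              apply ENNReal.ofReal_le_ofReal
              simp only [hQfdef, hC0def]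
              linarith [hg]
          _ = ENNReal.ofReal (Qf x + C0 - 2 * (∑ i, γ i * x i * v (ksel x) j i))
                + ENNReal.ofReal (2 * ∑ i, γ i * x i * a i) :=
              ENNReal.ofReal_add hc10 (by positivity)
          _ = ENNReal.ofReal (Qf x + C0 - 2 * (∑ i, γ i * x i * v (ksel x) j i))
                + ENNReal.ofReal 2 * ENNReal.ofReal (∑ i, γ i * x i * a i) := by
              rw [ENNReal.ofReal_mul (by norm_num : (0:ℝ) ≤ 2)]
      calc ∫⁻ a, ENNReal.ofReal (Qf (fun i => max (x i - v (ksel x) j i) 0 + a i)) ∂ν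
          ≤ ∫⁻ a, (ENNReal.ofReal (Qf x + C0 - 2 * (∑ i, γ i * x i * v (ksel x) j i))
              + ENNReal.ofReal 2 * ENNReal.ofReal (∑ i, γ i * x i * a i)) ∂ν :=
            lintegral_mono_ae hptwise
        _ = ENNReal.ofReal (Qf x + C0 - 2 * (∑ i, γ i * x i * v (ksel x) j i))
              + ENNReal.ofReal 2 * ENNReal.ofReal slam := by
            rw [lintegral_add_right _ (hmeasS.const_mul _), lintegral_const, measure_univ,
              mul_one, lintegral_const_mul _ hmeasS, hintlam]
        _ = ENNReal.ofReal (Qf x + C0 - 2 * (∑ i, γ i * x i * v (ksel x) j i) + 2 * slam) := by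
            rw [← ENNReal.ofReal_mul (by norm_num : (0:ℝ) ≤ 2),
              ← ENNReal.ofReal_add hc10 (by positivity)]
    refine le_trans (Finset.sum_le_sum fun j _ => mul_le_mul_right (hj j)
      (ENNReal.ofReal (p (ksel x) j))) ?_
    have hR0 : ∀ j : Fin (O (ksel x)),
        0 ≤ Qf x + C0 - 2 * (∑ i, γ i * x i * v (ksel x) j i) + 2 * slam := by
      intro j
      have := hc1all j
      linarith
    calc ∑ j : Fin (O (ksel x)), ENNReal.ofReal (p (ksel x) j) *
          ENNReal.ofReal (Qf x + C0 - 2 * (∑ i, γ i * x i * v (ksel x) j i) + 2 * slam)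
        = ENNReal.ofReal (∑ j : Fin (O (ksel x)), p (ksel x) j *
            (Qf x + C0 - 2 * (∑ i, γ i * x i * v (ksel x) j i) + 2 * slam)) := by
          rw [ENNReal.ofReal_sum_of_nonneg fun j _ => mul_nonneg (hp (ksel x) j) (hR0 j)]
          exact Finset.sum_congr rfl fun j _ => (ENNReal.ofReal_mul (hp (ksel x) j)).symm
      _ ≤ ENNReal.ofReal (Qf x + C0 - 2 * εs * Lf x) := by
          apply ENNReal.ofReal_le_ofReal
          have hpv : ∑ j : Fin (O (ksel x)), p (ksel x) j * (∑ i, γ i * x i * v (ksel x) j i)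
              = ∑ i, γ i * x i * μvec (ksel x) i := by
            calc ∑ j : Fin (O (ksel x)), p (ksel x) j * (∑ i, γ i * x i * v (ksel x) j i)
                = ∑ j : Fin (O (ksel x)), ∑ i, p (ksel x) j * (γ i * x i * v (ksel x) j i) := by
                  exact Finset.sum_congr rfl fun j _ => Finset.mul_sum _ _ _
              _ = ∑ i, ∑ j : Fin (O (ksel x)), p (ksel x) j * (γ i * x i * v (ksel x) j i) :=
                  Finset.sum_comm
              _ = ∑ i, γ i * x i * (∑ j : Fin (O (ksel x)), p (ksel x) j * v (ksel x) j i) := by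
                  refine Finset.sum_congr rfl fun i _ => ?_
                  rw [Finset.mul_sum]
                  exact Finset.sum_congr rfl fun j _ => by ring
              _ = ∑ i, γ i * x i * μvec (ksel x) i := by
                  exact Finset.sum_congr rfl fun i _ => by rw [← hμdef]
          have hsum : ∑ j : Fin (O (ksel x)), p (ksel x) j *
              (Qf x + C0 - 2 * (∑ i, γ i * x i * v (ksel x) j i) + 2 * slam)
              = (Qf x + C0 + 2 * slam) - 2 * ∑ i, γ i * x i * μvec (ksel x) i := by
            have e : ∀ j ∈ Finset.univ (α := Fin (O (ksel x))),
                p (ksel x) j * (Qf x + C0 - 2 * (∑ i, γ i * x i * v (ksel x) j i) + 2 * slam)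
                = p (ksel x) j * (Qf x + C0 + 2 * slam)
                  - 2 * (p (ksel x) j * (∑ i, γ i * x i * v (ksel x) j i)) := fun j _ => by ring
            rw [Finset.sum_congr rfl e, Finset.sum_sub_distrib, ← Finset.sum_mul, hp1, one_mul,
              ← Finset.mul_sum, hpv]
          rw [hsum]
          have hs := hsep x hx
          rw [← hslamdef] at hs
          linarith

  -- drift of Lf
  have D2 : ∀ x : Fin N → ℝ, (∀ i, 0 ≤ x i) → M0 ≤ Lf x →
      ∫⁻ y, ENNReal.ofReal (Lf y) ∂(Pker x) ≤ ENNReal.ofReal (Lf x - ε3) := by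
    intro x hx hM
    set t : ℝ := Lf x - ε3 with htdef
    have htpos : 0 < t := by
      have h1 : 0 ≤ C0 / εs := div_nonneg hC00 hεspos.le
      rw [htdef]
      have h2 := hM
      rw [hM0def] at h2
      linarith [hBpos]
    have hmeasQ : Measurable fun y : Fin N → ℝ => ENNReal.ofReal (Qf y) :=
      hQfcont.measurable.ennreal_ofReal
    have hpt : ∀ y : Fin N → ℝ, ENNReal.ofReal (Lf y)
        ≤ ENNReal.ofReal (1/(2*t)) * (ENNReal.ofReal (Qf y) + ENNReal.ofReal (t^2)) := by
      intro y
      rw [← ENNReal.ofReal_add (hQf0 y) (sq_nonneg t), ← ENNReal.ofReal_mul (by positivity)]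
      apply ENNReal.ofReal_le_ofReal
      have h3 : Lf y ^ 2 = Qf y := hLfsq y
      have h4 : 2 * t * Lf y ≤ Qf y + t^2 := by nlinarith [sq_nonneg (Lf y - t)]
      rw [show (1/(2*t)) * (Qf y + t^2) = (Qf y + t^2)/(2*t) by ring]
      rw [le_div_iff₀ (by positivity : (0:ℝ) < 2*t)]
      linarith
    calc ∫⁻ y, ENNReal.ofReal (Lf y) ∂(Pker x)
        ≤ ∫⁻ y, ENNReal.ofReal (1/(2*t)) *
            (ENNReal.ofReal (Qf y) + ENNReal.ofReal (t^2)) ∂(Pker x) :=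
          lintegral_mono hpt
      _ = ENNReal.ofReal (1/(2*t)) *
            ((∫⁻ y, ENNReal.ofReal (Qf y) ∂(Pker x)) + ENNReal.ofReal (t^2)) := by
          rw [lintegral_const_mul (f := fun y => ENNReal.ofReal (Qf y) + ENNReal.ofReal (t^2)) _
              (hmeasQ.add measurable_const),
            lintegral_add_right _ measurable_const, lintegral_const, hPuniv x, mul_one]
      _ ≤ ENNReal.ofReal (1/(2*t)) *
            (ENNReal.ofReal (Qf x + C0 - 2*εs*Lf x) + ENNReal.ofReal (t^2)) :=
          mul_le_mul_right (add_le_add_left (D1 x hx) _) _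
      _ ≤ ENNReal.ofReal (1/(2*t)) * (ENNReal.ofReal (t^2) + ENNReal.ofReal (t^2)) := by
          apply mul_le_mul_right
          apply add_le_add_left
          apply ENNReal.ofReal_le_ofReal
          have h3 : Lf x ^ 2 = Qf x := hLfsq x
          have h5 : C0 ≤ εs * Lf x := by
            have h6 := mul_le_mul_of_nonneg_left hM hεspos.le
            have h7 : εs * M0 = C0 + εs*(ε3 + B + 1) := by
              rw [hM0def]
              field_simp
              ring
            nlinarith [mul_nonneg hεspos.le
              (by linarith [hε3pos, hBpos] : (0:ℝ) ≤ ε3 + B + 1)]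
          have h8 : ε3 * Lf x ≤ (εs/2) * Lf x := mul_le_mul_of_nonneg_right hε3s (hLf0 x)
          rw [htdef]
          nlinarith [sq_nonneg ε3]
      _ = ENNReal.ofReal t := by
          rw [← ENNReal.ofReal_add (sq_nonneg t) (sq_nonneg t),
            ← ENNReal.ofReal_mul (by positivity)]
          congr 1
          field_simp
          ring

  -- measurability of the kernel and invariance as bind
  have hPm : Measurable Pker := by
    apply Measure.measurable_of_measurable_coe
    intro A hA
    set G : (k : Fin K) → (Fin N → ℝ) → ℝ≥0∞ := fun k x =>
      ∑ j : Fin (O k), ENNReal.ofReal (p k j) *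
        ν ((fun a : Fin N → ℝ => fun i => max (x i - v k j i) 0 + a i) ⁻¹' A) with hGdef
    have hPA : ∀ x, Pker x A = G (ksel x) x := by
      intro x
      rw [hPker x, Measure.finset_sum_apply]
      exact Finset.sum_congr rfl fun j _ => by
        rw [Measure.smul_apply, Measure.map_apply (hTmeas x (ksel x) j) hA, smul_eq_mul]
    have hGm : ∀ k, Measurable (G k) := by
      intro k
      apply Finset.measurable_sum
      intro j _
      apply Measurable.const_mul
      have hst : MeasurableSet {q : (Fin N → ℝ) × (Fin N → ℝ) |
          (fun i => max (q.1 i - v k j i) 0 + q.2 i) ∈ A} := by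
        have hφ : Measurable (fun q : (Fin N → ℝ) × (Fin N → ℝ) =>
            (fun i => max (q.1 i - v k j i) 0 + q.2 i)) := by
          apply measurable_pi_lambda
          intro i
          have h1 : Measurable fun q : (Fin N → ℝ) × (Fin N → ℝ) => q.1 i :=
            (measurable_pi_apply i).comp measurable_fst
          have h2 : Measurable fun q : (Fin N → ℝ) × (Fin N → ℝ) => q.2 i :=
            (measurable_pi_apply i).comp measurable_snd
          exact ((h1.sub measurable_const).max measurable_const).add h2
        exact hφ hA
      have key : Measurable (fun x : Fin N → ℝ => ν (Prod.mk x ⁻¹'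
          {q : (Fin N → ℝ) × (Fin N → ℝ) | (fun i => max (q.1 i - v k j i) 0 + q.2 i) ∈ A})) :=
        measurable_measure_prodMk_left hst
      have heq : (fun x : Fin N → ℝ =>
          ν ((fun a : Fin N → ℝ => fun i => max (x i - v k j i) 0 + a i) ⁻¹' A))
          = fun x : Fin N → ℝ => ν (Prod.mk x ⁻¹'
            {q : (Fin N → ℝ) × (Fin N → ℝ) | (fun i => max (q.1 i - v k j i) 0 + q.2 i) ∈ A}) := by
        funext x
        congr 1
      rw [heq]
      exact key
    have hrepr : (fun x => Pker x A) = fun x => ∑ k : Fin K, if ksel x = k then G k x else 0 := by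
      funext x
      rw [hPA x]
      rw [Finset.sum_ite_eq Finset.univ (ksel x) (fun k => G k x)]
      simp
    rw [hrepr]
    apply Finset.measurable_sum
    intro k _
    exact Measurable.ite (hkselmeas (measurableSet_singleton k)) (hGm k) measurable_const
  have hbind : Γ.bind Pker = Γ := by
    ext A hA
    rw [Measure.bind_apply hA hPm.aemeasurable]
    exact (hinv A hA).symm
  -- all moments of Lf are finite
  have hmom : ∀ n : ℕ, ∫⁻ x, ENNReal.ofReal (Lf x ^ (n+1)) ∂Γ ≠ ⊤ := by
    intro n
    set cn : ℝ := ((n:ℝ)+2)*ε3/2 with hcndef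
    have hcnpos : 0 < cn := by rw [hcndef]; positivity
    set Mn : ℝ := M0 + B + 1 + 2/ε3 * (((n:ℝ)+2) * (B^2*2^(n+1) + B^2)) with hMndef
    have htail0 : 0 ≤ 2/ε3 * (((n:ℝ)+2) * (B^2*2^(n+1) + B^2)) := by positivity
    have hM00 : 0 ≤ M0 := by
      rw [hM0def]
      have : 0 ≤ C0 / εs := div_nonneg hC00 hεspos.le
      linarith [hε3pos, hBpos]
    have hMnM0 : M0 ≤ Mn := by rw [hMndef]; linarith [hBpos]
    have hMn0 : 0 ≤ Mn := le_trans hM00 hMnM0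
    set bn : ℝ := (Mn + B)^(n+2) + cn * Mn^(n+1) with hbndef
    have hbn0 : 0 ≤ bn := by
      rw [hbndef]
      have h1 : (0:ℝ) ≤ (Mn + B)^(n+2) := pow_nonneg (by linarith [hBpos]) _
      have h2 : (0:ℝ) ≤ cn * Mn^(n+1) := mul_nonneg hcnpos.le (pow_nonneg hMn0 _)
      linarith
    set gfun : (Fin N → ℝ) → ℝ≥0∞ := fun x => ENNReal.ofReal (Lf x ^ (n+2)) with hgfundef
    set hfun : (Fin N → ℝ) → ℝ≥0∞ := fun x => ENNReal.ofReal (cn * Lf x ^ (n+1)) with hhfundef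
    have hgmeas : Measurable gfun := (hLfmeas.pow_const _).ennreal_ofReal
    have hhmeas : Measurable hfun := ((hLfmeas.pow_const _).const_mul cn).ennreal_ofReal
    have haeΓ : ∀ᵐ x ∂Γ, ∀ i, 0 ≤ x i := by
      rw [ae_iff]
      exact hΓ0
    have hdrift : ∀ᵐ x ∂Γ, (∫⁻ y, gfun y ∂(Pker x)) + hfun x
        ≤ gfun x + ENNReal.ofReal bn := by
      filter_upwards [haeΓ] with x hx
      by_cases hcase : Mn ≤ Lf x
      · -- large queue: genuine negative drift
        have hLfB : B + 1 ≤ Lf x := by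
          have := hM0B
          linarith [hMnM0]
        have hl0 : 0 ≤ Lf x - B := by linarith
        have hSmeas : MeasurableSet {y : Fin N → ℝ | Lf x - B ≤ Lf y ∧ Lf y ≤ Lf x + B} :=
          (measurableSet_le measurable_const hLfmeas).inter
            (measurableSet_le hLfmeas measurable_const)
        have haeL : ∀ᵐ y ∂(Pker x), Lf x - B ≤ Lf y ∧ Lf y ≤ Lf x + B := by
          apply haeP x _ hSmeas
          intro j a hab
          have hg := mw_geom γ Smax Amax hγ hSA x (v (ksel x) j) a hx
            (fun i => hv (ksel x) j i) hab
          constructor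
          · have h1 := hg.2.2.1
            simp only [hLfdef, hQfdef, hBdef]
            linarith [h1]
          · have h1 := hg.2.1
            simp only [hLfdef, hQfdef, hBdef]
            linarith [h1]
        have hcoef0 : (0:ℝ) ≤ ((n:ℝ)+2) * (Lf x + B)^(n+1) := by positivity
        have hsec : ∀ᵐ y ∂(Pker x), gfun y ≤ ENNReal.ofReal ((Lf x - B)^(n+2))
            + ENNReal.ofReal (((n:ℝ)+2) * (Lf x + B)^(n+1))
              * ENNReal.ofReal (Lf y - (Lf x - B)) := by
          filter_upwards [haeL] with y hy
          have hls := mw_secant hl0 hy.1 hy.2 n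
          push_cast at hls
          calc gfun y = ENNReal.ofReal (Lf y ^ (n+2)) := rfl
            _ ≤ ENNReal.ofReal ((Lf x - B)^(n+2)
                + ((n:ℝ)+2) * (Lf x + B)^(n+1) * (Lf y - (Lf x - B))) :=
              ENNReal.ofReal_le_ofReal (by linarith [hls])
            _ = ENNReal.ofReal ((Lf x - B)^(n+2))
                + ENNReal.ofReal (((n:ℝ)+2) * (Lf x + B)^(n+1))
                  * ENNReal.ofReal (Lf y - (Lf x - B)) := by
              rw [ENNReal.ofReal_add (pow_nonneg hl0 _)
                (mul_nonneg hcoef0 (by linarith [hy.1])),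
                ENNReal.ofReal_mul hcoef0]
        have hWmeas : Measurable fun y : Fin N → ℝ =>
            ENNReal.ofReal (Lf y - (Lf x - B)) :=
          (hLfmeas.sub measurable_const).ennreal_ofReal
        have hWsum : (∫⁻ y, ENNReal.ofReal (Lf y - (Lf x - B)) ∂(Pker x))
            + ENNReal.ofReal (Lf x - B) = ∫⁻ y, ENNReal.ofReal (Lf y) ∂(Pker x) := by
          calc (∫⁻ y, ENNReal.ofReal (Lf y - (Lf x - B)) ∂(Pker x))
              + ENNReal.ofReal (Lf x - B)
              = ∫⁻ y, (ENNReal.ofReal (Lf y - (Lf x - B))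
                  + ENNReal.ofReal (Lf x - B)) ∂(Pker x) := by
                rw [lintegral_add_right _ measurable_const, lintegral_const, hPuniv x, mul_one]
            _ = ∫⁻ y, ENNReal.ofReal (Lf y) ∂(Pker x) := by
                apply lintegral_congr_ae
                filter_upwards [haeL] with y hy
                rw [← ENNReal.ofReal_add (by linarith [hy.1]) hl0, sub_add_cancel]
        have hWle : ∫⁻ y, ENNReal.ofReal (Lf y - (Lf x - B)) ∂(Pker x)
            ≤ ENNReal.ofReal (B - ε3) := by
          have hD2 := D2 x hx (le_trans hMnM0 hcase)
          have hchain : (∫⁻ y, ENNReal.ofReal (Lf y - (Lf x - B)) ∂(Pker x))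
              + ENNReal.ofReal (Lf x - B)
              ≤ ENNReal.ofReal (B - ε3) + ENNReal.ofReal (Lf x - B) := by
            rw [hWsum, ← ENNReal.ofReal_add (by linarith [hε3B]) hl0]
            calc ∫⁻ y, ENNReal.ofReal (Lf y) ∂(Pker x)
                ≤ ENNReal.ofReal (Lf x - ε3) := hD2
              _ = ENNReal.ofReal (B - ε3 + (Lf x - B)) := by ring_nf
          exact (ENNReal.add_le_add_iff_right ENNReal.ofReal_ne_top).mp hchain
        have hint : ∫⁻ y, gfun y ∂(Pker x) ≤ ENNReal.ofReal ((Lf x - B)^(n+2))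
            + ENNReal.ofReal (((n:ℝ)+2) * (Lf x + B)^(n+1)) * ENNReal.ofReal (B - ε3) := by
          calc ∫⁻ y, gfun y ∂(Pker x)
              ≤ ∫⁻ y, (ENNReal.ofReal ((Lf x - B)^(n+2))
                + ENNReal.ofReal (((n:ℝ)+2) * (Lf x + B)^(n+1))
                  * ENNReal.ofReal (Lf y - (Lf x - B))) ∂(Pker x) := lintegral_mono_ae hsec
            _ = ENNReal.ofReal ((Lf x - B)^(n+2))
                + ENNReal.ofReal (((n:ℝ)+2) * (Lf x + B)^(n+1))
                  * ∫⁻ y, ENNReal.ofReal (Lf y - (Lf x - B)) ∂(Pker x) := by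
                rw [lintegral_add_right _ (hWmeas.const_mul _), lintegral_const, hPuniv x,
                  mul_one, lintegral_const_mul _ hWmeas]
            _ ≤ ENNReal.ofReal ((Lf x - B)^(n+2))
                + ENNReal.ofReal (((n:ℝ)+2) * (Lf x + B)^(n+1)) * ENNReal.ofReal (B - ε3) :=
                add_le_add_right (mul_le_mul_right hWle _) _
        have hL2cond : 2/ε3 * (((n:ℝ)+2) * (B^2*2^(n+1) + B^2)) ≤ Lf x := by
          rw [hMndef] at hcase
          linarith [hM00, hBpos]
        have hreal := mw_drift_real hBpos hε3pos hε3B n hLfB hL2cond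
        push_cast at hreal
        have hlhs0 : 0 ≤ (Lf x - B)^(n+2) + ((n:ℝ)+2)*(Lf x + B)^(n+1)*(B - ε3) := by
          have h1 : (0:ℝ) ≤ (Lf x - B)^(n+2) := pow_nonneg hl0 _
          have h2 : (0:ℝ) ≤ ((n:ℝ)+2)*(Lf x + B)^(n+1)*(B - ε3) :=
            mul_nonneg hcoef0 (by linarith [hε3B])
          linarith
        have hsub0 : 0 ≤ Lf x ^ (n+2) - cn * Lf x ^ (n+1) := by
          rw [hcndef]
          have := hreal
          nlinarith [hlhs0]
        calc (∫⁻ y, gfun y ∂(Pker x)) + hfun x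
            ≤ (ENNReal.ofReal ((Lf x - B)^(n+2))
              + ENNReal.ofReal (((n:ℝ)+2) * (Lf x + B)^(n+1)) * ENNReal.ofReal (B - ε3))
              + ENNReal.ofReal (cn * Lf x ^ (n+1)) := add_le_add_left hint _
          _ = ENNReal.ofReal ((Lf x - B)^(n+2)
              + ((n:ℝ)+2) * (Lf x + B)^(n+1) * (B - ε3)) + ENNReal.ofReal (cn * Lf x ^ (n+1)) := by
              rw [← ENNReal.ofReal_mul hcoef0, ← ENNReal.ofReal_add (pow_nonneg hl0 _)
                (mul_nonneg hcoef0 (by linarith [hε3B]))]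
          _ ≤ ENNReal.ofReal (Lf x ^ (n+2) - cn * Lf x ^ (n+1))
              + ENNReal.ofReal (cn * Lf x ^ (n+1)) := by
              apply add_le_add_left
              apply ENNReal.ofReal_le_ofReal
              rw [hcndef]
              linarith [hreal]
          _ = ENNReal.ofReal (Lf x ^ (n+2)) := by
              rw [← ENNReal.ofReal_add hsub0
                (mul_nonneg hcnpos.le (pow_nonneg (hLf0 x) _)), sub_add_cancel]
          _ ≤ gfun x + ENNReal.ofReal bn := le_self_add
      · -- small queue: bounded jump
        push_neg at hcase
        have hSmeas : MeasurableSet {y : Fin N → ℝ | Lf y ≤ Lf x + B} :=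
          measurableSet_le hLfmeas measurable_const
        have haeU : ∀ᵐ y ∂(Pker x), Lf y ≤ Lf x + B := by
          apply haeP x _ hSmeas
          intro j a hab
          have hg := mw_geom γ Smax Amax hγ hSA x (v (ksel x) j) a hx
            (fun i => hv (ksel x) j i) hab
          have h1 := hg.2.1
          simp only [Set.mem_setOf_eq, hLfdef, hQfdef, hBdef]
          linarith [h1]
        have hgb : ∫⁻ y, gfun y ∂(Pker x) ≤ ENNReal.ofReal ((Mn + B)^(n+2)) := by
          calc ∫⁻ y, gfun y ∂(Pker x)
              ≤ ∫⁻ _, ENNReal.ofReal ((Mn + B)^(n+2)) ∂(Pker x) := by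
                apply lintegral_mono_ae
                filter_upwards [haeU] with y hy
                apply ENNReal.ofReal_le_ofReal
                calc Lf y ^ (n+2) ≤ (Lf x + B)^(n+2) :=
                      pow_le_pow_left₀ (hLf0 y) hy _
                  _ ≤ (Mn + B)^(n+2) :=
                      pow_le_pow_left₀ (by linarith [hLf0 x, hBpos]) (by linarith) _
            _ = ENNReal.ofReal ((Mn + B)^(n+2)) := by
                rw [lintegral_const, hPuniv x, mul_one]
        have hhb : hfun x ≤ ENNReal.ofReal (cn * Mn^(n+1)) := by
          apply ENNReal.ofReal_le_ofReal
          exact mul_le_mul_of_nonneg_left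
            (pow_le_pow_left₀ (hLf0 x) hcase.le _) hcnpos.le
        calc (∫⁻ y, gfun y ∂(Pker x)) + hfun x
            ≤ ENNReal.ofReal ((Mn + B)^(n+2)) + ENNReal.ofReal (cn * Mn^(n+1)) :=
              add_le_add hgb hhb
          _ = ENNReal.ofReal bn := by
              rw [← ENNReal.ofReal_add (pow_nonneg (by linarith [hBpos]) _)
                (mul_nonneg hcnpos.le (pow_nonneg hMn0 _)), hbndef]
          _ ≤ gfun x + ENNReal.ofReal bn := le_add_self
    have hbound := mw_invariant_bound Γ Pker hPm hbind gfun hfun hgmeas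
      (fun x => ENNReal.ofReal_ne_top) hhmeas (ENNReal.ofReal bn) hdrift
      (Filter.Eventually.of_forall hPuniv)
    have hsplit : ∫⁻ x, hfun x ∂Γ
        = ENNReal.ofReal cn * ∫⁻ x, ENNReal.ofReal (Lf x ^ (n+1)) ∂Γ := by
      rw [← lintegral_const_mul _ (hLfmeas.pow_const _).ennreal_ofReal]
      apply lintegral_congr
      intro x
      exact ENNReal.ofReal_mul hcnpos.le
    intro htop
    rw [hsplit, htop, ENNReal.mul_top (by
      simp only [ne_eq, ENNReal.ofReal_eq_zero, not_le]
      exact hcnpos)] at hbound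
    exact ENNReal.ofReal_ne_top (top_le_iff.mp hbound)

  -- conclusion
  obtain ⟨m, hm⟩ := exists_nat_ge r
  set c2 : ℝ := 1 / Real.sqrt (γ im) with hc2def
  have hc20 : 0 ≤ c2 := by positivity
  have hWL : ∀ x : Fin N → ℝ, Real.sqrt (∑ i, x i ^ 2) ≤ c2 * Lf x := by
    intro x
    have h1 : ∑ i, x i ^ 2 ≤ c2^2 * Qf x := by
      rw [hQfdef, hc2def, Finset.mul_sum]
      refine Finset.sum_le_sum fun i _ => ?_
      have h2 : (1/Real.sqrt (γ im))^2 = 1/(γ im) := by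
        rw [div_pow, one_pow, Real.sq_sqrt (hγ im).le]
      rw [h2, div_mul_eq_mul_div, le_div_iff₀ (hγ im)]
      have h3 := mul_le_mul_of_nonneg_left (himle i) (sq_nonneg (x i))
      nlinarith [h3]
    calc Real.sqrt (∑ i, x i ^ 2) ≤ Real.sqrt (c2^2 * Qf x) := Real.sqrt_le_sqrt h1
      _ = c2 * Lf x := by
        rw [Real.sqrt_mul (sq_nonneg c2), Real.sqrt_sq hc20, hLfdef]
  have hpt : ∀ x : Fin N → ℝ, ENNReal.ofReal (Real.sqrt (∑ i, x i ^ 2) ^ r)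
      ≤ 1 + ENNReal.ofReal (c2^(m+1)) * ENNReal.ofReal (Lf x ^ (m+1)) := by
    intro x
    set W : ℝ := Real.sqrt (∑ i, x i ^ 2) with hWdef
    have hW0 : 0 ≤ W := Real.sqrt_nonneg _
    rcases le_total W 1 with hle | hge
    · have hb : W ^ r ≤ 1 := Real.rpow_le_one hW0 hle hr.le
      calc ENNReal.ofReal (W ^ r) ≤ ENNReal.ofReal 1 := ENNReal.ofReal_le_ofReal hb
        _ = 1 := ENNReal.ofReal_one
        _ ≤ _ := le_self_add
    · have h1 : W ^ r ≤ W ^ ((m+1 : ℕ) : ℝ) :=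
        Real.rpow_le_rpow_of_exponent_le hge (by push_cast; linarith)
      rw [Real.rpow_natCast] at h1
      have h2 : W ^ (m+1) ≤ (c2 * Lf x)^(m+1) := pow_le_pow_left₀ hW0 (hWL x) _
      have h3 : (c2 * Lf x)^(m+1) = c2^(m+1) * Lf x^(m+1) := mul_pow _ _ _
      calc ENNReal.ofReal (W ^ r) ≤ ENNReal.ofReal (c2^(m+1) * Lf x ^(m+1)) :=
            ENNReal.ofReal_le_ofReal (by linarith)
        _ = ENNReal.ofReal (c2^(m+1)) * ENNReal.ofReal (Lf x ^ (m+1)) :=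
            ENNReal.ofReal_mul (by positivity)
        _ ≤ _ := le_add_self
  calc ∫⁻ x, ENNReal.ofReal (Real.sqrt (∑ i, x i ^ 2) ^ r) ∂Γ
      ≤ ∫⁻ x, (1 + ENNReal.ofReal (c2^(m+1)) * ENNReal.ofReal (Lf x ^ (m+1))) ∂Γ :=
        lintegral_mono hpt
    _ = 1 + ENNReal.ofReal (c2^(m+1)) * ∫⁻ x, ENNReal.ofReal (Lf x ^ (m+1)) ∂Γ := by
        rw [lintegral_add_left measurable_const,
          lintegral_const_mul _ (hLfmeas.pow_const _).ennreal_ofReal, lintegral_const,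
          measure_univ, mul_one]
    _ < ⊤ := by
        apply ENNReal.add_lt_top.mpr
        refine ⟨ENNReal.one_lt_top, ?_⟩
        exact ENNReal.mul_lt_top ENNReal.ofReal_lt_top (lt_top_iff_ne_top.mpr (hmom m))
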